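/- arXiv:2512.06733 — 2 statements merged into one kernel-verified Lean document; each statement's English description precedes it below -/
import Mathlib

section
/- Let n ≥ 2, let τ₁, …, τ_{n−1} be 2×2 real orthogonal matrices, and let Q' be the augmented reflection-based Laplacian on ℝ^{2n} with designated index ℓ, unit normal n̂, and unit mirror direction L̂ (with n̂·L̂ = 0). Then for every initial configuration p(0) ∈ (ℝ²)ⁿ, the solution p(t) = exp(−tQ')p(0) of ṗ = −Q'p converges as t → ∞ to (1/n)·(Σ_{k=1}^{n} ⟨S_k L̂, p_k(0)⟩)·V₀, i.e. to the orthogonal projection of p(0) onto the line spanned by V₀ = (S₁L̂, …, SₙL̂); moreover the convergence is exponential: there exists λ > 0 such that ‖p(t) − (1/n)⟨V₀, p(0)⟩ V₀‖ ≤ e^{−λt}‖p(0)‖ for all t ≥ 0. -/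
open Filter Topology Matrix

noncomputable section

abbrev Cfg (n : ℕ) := EuclideanSpace ℝ (Fin n × Fin 2)

/-- Multiplication of a 2×2 matrix with a planar vector. -/
def mv (M : Matrix (Fin 2) (Fin 2) ℝ) (v : EuclideanSpace ℝ (Fin 2)) :
    EuclideanSpace ℝ (Fin 2) := WithLp.toLp 2 (M.mulVec v)

/-- Multiplication of a 2n×2n matrix with a configuration vector. -/
def mvC {n : ℕ} (M : Matrix (Fin n × Fin 2) (Fin n × Fin 2) ℝ) (v : Cfg n) : Cfg n :=
  WithLp.toLp 2 (M.mulVec v)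

/-- The i-th planar component of a configuration. -/
def blk {n : ℕ} (p : Cfg n) (i : Fin n) : EuclideanSpace ℝ (Fin 2) :=
  WithLp.toLp 2 (fun a => p (i, a))

/-- The action of the matrix-weighted Laplacian Q of the path graph on vertices 0, …, n-1
(with matrix weight τ e on the edge {e, e+1}):
(Qp)ᵢ = (pᵢ − τ_{i-1} p_{i-1}) + (pᵢ − τᵢᵀ p_{i+1}), where the first summand is omitted
for the first vertex and the second for the last. -/
def lapAct (n : ℕ) (τ : Fin (n - 1) → Matrix (Fin 2) (Fin 2) ℝ)
    (p : Fin n → EuclideanSpace ℝ (Fin 2)) (i : Fin n) : EuclideanSpace ℝ (Fin 2) :=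
  (if h : 0 < (i : ℕ) then
      p i - mv (τ ⟨(i : ℕ) - 1, by have := i.isLt; omega⟩)
        (p ⟨(i : ℕ) - 1, by have := i.isLt; omega⟩)
    else 0)
  + (if h : (i : ℕ) + 1 < n then
      p i - mv (τ ⟨(i : ℕ), by omega⟩)ᵀ (p ⟨(i : ℕ) + 1, h⟩)
    else 0)

/-- The action of the augmented reflection-based Laplacian Q', with designated index ℓ and
unit normal n̂: (Q'p)ᵢ = (Qp)ᵢ + [i = ℓ]·2(n̂·p_ℓ)n̂. -/
def lapAugAct (n : ℕ) (τ : Fin (n - 1) → Matrix (Fin 2) (Fin 2) ℝ) (ℓ : Fin n)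
    (nh : EuclideanSpace ℝ (Fin 2)) (p : Fin n → EuclideanSpace ℝ (Fin 2)) (i : Fin n) :
    EuclideanSpace ℝ (Fin 2) :=
  lapAct n τ p i + if i = ℓ then (2 * (inner ℝ nh (p ℓ) : ℝ)) • nh else 0

/-- V₀ = (S₁ L̂, …, Sₙ L̂). -/
def V0 {n : ℕ} (S : Fin n → Matrix (Fin 2) (Fin 2) ℝ) (L : EuclideanSpace ℝ (Fin 2)) : Cfg n :=
  WithLp.toLp 2 (fun x : Fin n × Fin 2 => mv (S x.1) L x.2)

/-- Left endpoint of edge e of the path graph, as a vertex. -/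
def eL {n : ℕ} (e : Fin (n - 1)) : Fin n := ⟨e, by have := e.isLt; omega⟩
/-- Right endpoint of edge e of the path graph, as a vertex. -/
def eR {n : ℕ} (e : Fin (n - 1)) : Fin n := ⟨(e : ℕ) + 1, by have := e.isLt; omega⟩

/-!
`Q'` is positive semidefinite: writing `(Bx)ₑ = x_{e+1} - τₑ xₑ` for the edge differences,
`⟪Q'x, y⟫ = ∑ₑ ⟪(Bx)ₑ, (By)ₑ⟫ + 2 ⟪n̂, x_ℓ⟫ ⟪n̂, y_ℓ⟫`. Hence `Q'x = 0` iff `Bx = 0` and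
`x_ℓ ⊥ n̂`, i.e. `x_ℓ ∈ ℝ L̂` propagated along the path by the `τₑ`: the kernel is the line `ℝ V₀`.
In an orthonormal eigenbasis of `Q'`, `exp (-t Q')` fixes the kernel coordinates and damps every
other one by at least `exp (-λ t)`, `λ` the least positive eigenvalue. So `exp (-t Q') p(0)`
converges exponentially fast to the orthogonal projection `(⟪V₀, p(0)⟫ / ‖V₀‖²) V₀` of `p(0)` onto
`ℝ V₀`, and `‖V₀‖² = n` because every `Sₖ` is orthogonal.
-/

open scoped RealInnerProductSpace

theorem Finite.exists_pos_le_of_pos {ι : Type*} [Finite ι] (f : ι → ℝ) :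
    ∃ c > 0, ∀ i, 0 < f i → c ≤ f i := by
  cases isEmpty_or_nonempty ι
  · exact ⟨1, one_pos, fun i => isEmptyElim i⟩
  obtain ⟨i₀, hi₀⟩ := Finite.exists_min fun i => if 0 < f i then f i else 1
  refine ⟨_, ?_, fun i hi => (hi₀ i).trans_eq (if_pos hi)⟩
  split_ifs with h <;> simp [h]

theorem NormedSpace.exp_apply_of_apply_eq_smul {E : Type*} [NormedAddCommGroup E] [NormedSpace ℝ E]
    [CompleteSpace E] {A : E →L[ℝ] E} {v : E} {μ : ℝ} (h : A v = μ • v) :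
    NormedSpace.exp A v = Real.exp μ • v := by
  have hpow : ∀ k : ℕ, (A ^ k) v = μ ^ k • v := fun k => by
    induction k with
    | zero => simp
    | succ k ih => rw [pow_succ', mul_apply_eq_comp, ih, map_smul, h, smul_smul, pow_succ]
  have hA := (NormedSpace.exp_series_hasSum_exp' (𝕂 := ℝ) A).mapL
    (ContinuousLinearMap.apply ℝ E v)
  have hμ := (NormedSpace.exp_series_hasSum_exp' (𝕂 := ℝ) μ).smul_const v
  simp only [ContinuousLinearMap.apply_apply, _root_.smul_apply, hpow, smul_smul,
    smul_eq_mul] at hA hμ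
  rw [← Real.exp_eq_exp_ℝ] at hμ
  exact hA.unique hμ

section InnerProductSpace

variable {E : Type*} [NormedAddCommGroup E] [InnerProductSpace ℝ E]

theorem orthonormal_pair {u w : E} (hu : ‖u‖ = 1) (hw : ‖w‖ = 1) (huw : ⟪u, w⟫ = 0) :
    Orthonormal ℝ ![u, w] := by
  rw [orthonormal_iff_ite]
  intro i j
  fin_cases i <;> fin_cases j <;> simp [hu, hw, huw, real_inner_comm]

theorem eq_inner_smul_of_inner_eq_zero (hE : Module.finrank ℝ E = 2) {u w : E}
    (huw : Orthonormal ℝ ![u, w]) {v : E} (hv : ⟪u, v⟫ = 0) : v = ⟪w, v⟫ • w := by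
  let b := (basisOfOrthonormalOfCardEqFinrank huw (by simp [hE])).toOrthonormalBasis
    (by simpa using huw)
  simpa [b, Fin.sum_univ_two, hv] using (b.sum_repr' v).symm

theorem OrthonormalBasis.norm_le_of_norm_inner_le {ι : Type*} [Fintype ι]
    (b : OrthonormalBasis ι ℝ E) {x y : E} {c : ℝ} (hc : 0 ≤ c)
    (h : ∀ i, ‖⟪b i, y⟫‖ ≤ c * ‖⟪b i, x⟫‖) : ‖y‖ ≤ c * ‖x‖ := by
  have hsq : ‖y‖ ^ 2 ≤ (c * ‖x‖) ^ 2 := by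
    rw [mul_pow, ← b.sum_sq_norm_inner_right, ← b.sum_sq_norm_inner_right, Finset.mul_sum]
    gcongr with i
    rw [← mul_pow]
    exact pow_le_pow_left₀ (norm_nonneg _) (h i) 2
  exact (pow_le_pow_iff_left₀ (norm_nonneg _) (by positivity) two_ne_zero).mp hsq

variable [FiniteDimensional ℝ E]

theorem ContinuousLinearMap.IsPositive.exists_norm_exp_neg_smul_sub_starProjection_le
    {T : E →L[ℝ] E} (hT : T.IsPositive) :
    ∃ lam > 0, ∀ t : ℝ, 0 ≤ t → ∀ x : E,
      ‖NormedSpace.exp ((-t) • T) x - T.ker.starProjection x‖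
        ≤ Real.exp (-lam * t) * ‖x‖ := by
  have hT' : (T : E →ₗ[ℝ] E).IsPositive := hT
  have hsym := hT'.isSymmetric
  let b := hsym.eigenvectorBasis rfl
  let μ := hsym.eigenvalues rfl
  have hb : ∀ i, T (b i) = μ i • b i := hsym.apply_eigenvectorBasis rfl
  obtain ⟨lam, hlam, hle⟩ := Finite.exists_pos_le_of_pos μ
  refine ⟨lam, hlam, fun t ht x => b.norm_le_of_norm_inner_le (Real.exp_pos _).le fun i => ?_⟩
  have hexp : IsSelfAdjoint (NormedSpace.exp ((-t) • T)) :=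
    ((IsSelfAdjoint.all (-t)).smul (ContinuousLinearMap.IsPositive.isSelfAdjoint hT)).exp
  have hbexp : NormedSpace.exp ((-t) • T) (b i) = Real.exp (-t * μ i) • b i :=
    NormedSpace.exp_apply_of_apply_eq_smul (by simp [hb, smul_smul])
  rw [inner_sub_right, ← Submodule.inner_starProjection_left_eq_right,
    ← ContinuousLinearMap.adjoint_inner_left, hexp.adjoint_eq, hbexp, real_inner_smul_left]
  have hμ : 0 ≤ μ i := hT'.nonneg_eigenvalues rfl i
  rcases hμ.eq_or_lt with h0 | hpos
  · have hker : b i ∈ T.ker := by simp [hb, ← h0]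
    simp [Submodule.starProjection_eq_self_iff.mpr hker, ← h0]
    positivity
  · have hperp : b i ∈ T.kerᗮ := fun w hw => by
      have h : μ i * ⟪w, b i⟫ = 0 := by
        rw [← real_inner_smul_right, ← hb, ← ContinuousLinearMap.coe_coe, ← hsym,
          LinearMap.mem_ker.mp hw, inner_zero_left]
      exact (mul_eq_zero.mp h).resolve_left hpos.ne'
    rw [(Submodule.starProjection_apply_eq_zero_iff _).mpr hperp, inner_zero_left, sub_zero,
      norm_mul, Real.norm_of_nonneg (Real.exp_pos _).le]
    gcongr ?_ * _
    exact Real.exp_le_exp.mpr (by nlinarith [hle i hpos])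

theorem ContinuousLinearMap.IsPositive.tendsto_exp_neg_smul_apply {T : E →L[ℝ] E}
    (hT : T.IsPositive) (x : E) :
    Tendsto (fun t : ℝ => NormedSpace.exp ((-t) • T) x) atTop (𝓝 (T.ker.starProjection x)) := by
  obtain ⟨lam, hlam, h⟩ := hT.exists_norm_exp_neg_smul_sub_starProjection_le
  rw [tendsto_iff_norm_sub_tendsto_zero]
  refine squeeze_zero' (Eventually.of_forall fun _ => norm_nonneg _)
    ((eventually_ge_atTop 0).mono fun t ht => h t ht x) ?_
  simpa using (Real.tendsto_exp_neg_atTop_nhds_zero.comp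
    (tendsto_id.const_mul_atTop hlam)).mul_const ‖x‖

end InnerProductSpace

/- Matrices carry no global norm, but `exp` is defined topologically, so `map_exp` may be
invoked with any complete normed-algebra structure on them. -/
theorem Matrix.toEuclideanCLM_exp {ι : Type*} [Fintype ι] [DecidableEq ι] (M : Matrix ι ι ℝ) :
    Matrix.toEuclideanCLM (𝕜 := ℝ) (NormedSpace.exp M) =
      NormedSpace.exp (Matrix.toEuclideanCLM (𝕜 := ℝ) M) := by
  let _ := Matrix.linftyOpNormedRing (n := ι) (α := ℝ)
  let _ := Matrix.linftyOpNormedAlgebra (R := ℝ) (n := ι) (α := ℝ)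
  let _ := Matrix.linftyOpNormedAlgebra (R := ℚ) (n := ι) (α := ℝ)
  have : CompleteSpace (Matrix ι ι ℝ) := FiniteDimensional.complete ℝ _
  exact NormedSpace.map_exp (Matrix.toEuclideanCLM (𝕜 := ℝ) (n := ι))
    (LinearMap.continuous_of_finiteDimensional
      (Matrix.toEuclideanCLM (𝕜 := ℝ) (n := ι)).toAlgEquiv.toLinearMap) M

section Plane

lemma inner_fin_two (x y : EuclideanSpace ℝ (Fin 2)) : ⟪x, y⟫ = x 0 * y 0 + x 1 * y 1 := by
  simp [PiLp.inner_apply, Fin.sum_univ_two, mul_comm]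

lemma mv_apply (M : Matrix (Fin 2) (Fin 2) ℝ) (v : EuclideanSpace ℝ (Fin 2)) (a : Fin 2) :
    mv M v a = M a 0 * v 0 + M a 1 * v 1 := by
  fin_cases a <;> simp [mv]

lemma inner_mv_left (M : Matrix (Fin 2) (Fin 2) ℝ) (x y : EuclideanSpace ℝ (Fin 2)) :
    ⟪mv M x, y⟫ = ⟪x, mv Mᵀ y⟫ := by
  simp only [inner_fin_two, mv_apply, Matrix.transpose_apply]
  ring

lemma mv_mv (A B : Matrix (Fin 2) (Fin 2) ℝ) (v : EuclideanSpace ℝ (Fin 2)) :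
    mv A (mv B v) = mv (A * B) v := by
  simp only [mv, WithLp.ofLp_toLp, Matrix.mulVec_mulVec]

@[simp] lemma mv_one (v : EuclideanSpace ℝ (Fin 2)) : mv 1 v = v := by simp [mv]

lemma mv_smul (M : Matrix (Fin 2) (Fin 2) ℝ) (c : ℝ) (v : EuclideanSpace ℝ (Fin 2)) :
    mv M (c • v) = c • mv M v := by
  simp only [mv, WithLp.ofLp_smul, Matrix.mulVec_smul, WithLp.toLp_smul]

variable {M : Matrix (Fin 2) (Fin 2) ℝ}

lemma inner_mv_mv (hM : Mᵀ * M = 1) (x y : EuclideanSpace ℝ (Fin 2)) :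
    ⟪mv M x, mv M y⟫ = ⟪x, y⟫ := by
  rw [inner_mv_left, mv_mv, hM, mv_one]

lemma norm_mv (hM : Mᵀ * M = 1) (v : EuclideanSpace ℝ (Fin 2)) : ‖mv M v‖ = ‖v‖ := by
  rw [norm_eq_sqrt_real_inner, inner_mv_mv hM, ← norm_eq_sqrt_real_inner]

lemma mv_injective (hM : Mᵀ * M = 1) : Function.Injective (mv M) := fun x y hxy => by
  simpa [mv_mv, hM] using congrArg (mv Mᵀ) hxy

lemma inner_sub_mv_add_inner_sub_mv (hM : Mᵀ * M = 1) (u v w z : EuclideanSpace ℝ (Fin 2)) :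
    ⟪u - mv M v, w⟫ + ⟪v - mv Mᵀ u, z⟫ = ⟪u - mv M v, w - mv M z⟫ := by
  have h₁ : ⟪mv Mᵀ u, z⟫ = ⟪u, mv M z⟫ := by rw [inner_mv_left, Matrix.transpose_transpose]
  have h₂ : ⟪mv M v, mv M z⟫ = ⟪v, z⟫ := inner_mv_mv hM v z
  simp only [inner_sub_left, inner_sub_right]
  linarith

end Plane

theorem forall_of_iff_eL_eR {n : ℕ} {P : Fin n → Prop}
    (h : ∀ e : Fin (n - 1), P (eL e) ↔ P (eR e)) {i : Fin n} (hi : P i) (j : Fin n) : P j := by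
  have key : ∀ k (hk : k < n), P ⟨k, hk⟩ ↔ P ⟨0, by omega⟩ := by
    intro k
    induction k with
    | zero => exact fun _ => Iff.rfl
    | succ k ih => exact fun hk => (h ⟨k, by omega⟩).symm.trans (ih (by omega))
  exact (key j j.isLt).mpr ((key i i.isLt).mp hi)

section Path

variable {n : ℕ} {τ : Fin (n - 1) → Matrix (Fin 2) (Fin 2) ℝ} {ℓ : Fin n}
  {S : Fin n → Matrix (Fin 2) (Fin 2) ℝ}

lemma S_eR_eq (hτ : ∀ e, (τ e)ᵀ * τ e = 1)
    (hSup : ∀ e : Fin (n - 1), (ℓ : ℕ) ≤ (e : ℕ) → S (eR e) = τ e * S (eL e))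
    (hSdown : ∀ e : Fin (n - 1), (e : ℕ) < (ℓ : ℕ) → S (eL e) = (τ e)ᵀ * S (eR e))
    (e : Fin (n - 1)) : S (eR e) = τ e * S (eL e) := by
  rcases le_or_gt (ℓ : ℕ) (e : ℕ) with h | h
  · exact hSup e h
  · rw [hSdown e h, ← mul_assoc, mul_eq_one_comm.mp (hτ e), one_mul]

lemma transpose_mul_self_S (hτ : ∀ e, (τ e)ᵀ * τ e = 1) (hSl : S ℓ = 1)
    (hSR : ∀ e, S (eR e) = τ e * S (eL e)) (k : Fin n) : (S k)ᵀ * S k = 1 := by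
  refine forall_of_iff_eL_eR (P := fun k => (S k)ᵀ * S k = 1) (fun e => ?_) (i := ℓ)
    (by simp [hSl]) k
  rw [hSR e, Matrix.transpose_mul, mul_assoc, ← mul_assoc (τ e)ᵀ, hτ e, one_mul]

end Path

section Laplacian

variable {n : ℕ}

/-- `(B x)ₑ` for the signed incidence operator `B` of the weighted path; `Q = Bᵀ B`. -/
def edgeDiff (τ : Fin (n - 1) → Matrix (Fin 2) (Fin 2) ℝ) (x : Cfg n) (e : Fin (n - 1)) :
    EuclideanSpace ℝ (Fin 2) :=
  blk x (eR e) - mv (τ e) (blk x (eL e))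

lemma Cfg.ext_blk {x y : Cfg n} (h : ∀ i, blk x i = blk y i) : x = y := by
  ext ⟨i, a⟩
  exact congrArg (· a) (h i)

lemma blk_smul (c : ℝ) (x : Cfg n) (i : Fin n) : blk (c • x) i = c • blk x i := rfl

lemma inner_eq_sum_inner_blk (x y : Cfg n) : ⟪x, y⟫ = ∑ i, ⟪blk x i, blk y i⟫ := by
  simp [PiLp.inner_apply, Fintype.sum_prod_type, blk]

variable {τ : Fin (n - 1) → Matrix (Fin 2) (Fin 2) ℝ}

lemma sum_inner_lapAct (hτ : ∀ e, (τ e)ᵀ * τ e = 1) (x y : Cfg n) :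
    ∑ i, ⟪lapAct n τ (blk x) i, blk y i⟫ = ∑ e, ⟪edgeDiff τ x e, edgeDiff τ y e⟫ := by
  rcases n with _ | m
  · simp
  simp only [lapAct, inner_add_left, Finset.sum_add_distrib]
  rw [Fin.sum_univ_succ, dif_neg (by simp), inner_zero_left, zero_add, Fin.sum_univ_castSucc,
    dif_neg (by simp), inner_zero_left, add_zero, ← Finset.sum_add_distrib]
  refine Finset.sum_congr rfl fun e _ => ?_
  rw [dif_pos (by simp), dif_pos (by simp)]
  exact inner_sub_mv_add_inner_sub_mv (hτ e) _ _ _ _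

lemma sum_inner_lapAugAct (hτ : ∀ e, (τ e)ᵀ * τ e = 1) (ℓ : Fin n)
    (nh : EuclideanSpace ℝ (Fin 2)) (x y : Cfg n) :
    ∑ i, ⟪lapAugAct n τ ℓ nh (blk x) i, blk y i⟫ =
      ∑ e, ⟪edgeDiff τ x e, edgeDiff τ y e⟫ + 2 * ⟪nh, blk x ℓ⟫ * ⟪nh, blk y ℓ⟫ := by
  simp only [lapAugAct, inner_add_left, Finset.sum_add_distrib, sum_inner_lapAct hτ]
  rw [Finset.sum_eq_single ℓ (fun i _ hi => by simp [hi]) (by simp)]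
  simp [real_inner_smul_left, mul_assoc]

variable {S : Fin n → Matrix (Fin 2) (Fin 2) ℝ} {ℓ : Fin n} {nh Lh : EuclideanSpace ℝ (Fin 2)}

lemma edgeDiff_smul (c : ℝ) (x : Cfg n) (e : Fin (n - 1)) :
    edgeDiff τ (c • x) e = c • edgeDiff τ x e := by
  rw [edgeDiff, edgeDiff, blk_smul, blk_smul, mv_smul, smul_sub]

lemma blk_V0 (k : Fin n) : blk (V0 S Lh) k = mv (S k) Lh := rfl

lemma edgeDiff_V0 (hSR : ∀ e, S (eR e) = τ e * S (eL e)) (e : Fin (n - 1)) :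
    edgeDiff τ (V0 S Lh) e = 0 := by
  rw [edgeDiff, blk_V0, blk_V0, hSR, mv_mv, sub_self]

lemma eq_smul_V0_of_edgeDiff_eq_zero (hτ : ∀ e, (τ e)ᵀ * τ e = 1) (hSl : S ℓ = 1)
    (hSR : ∀ e, S (eR e) = τ e * S (eL e)) (hnh : ‖nh‖ = 1) (hLh : ‖Lh‖ = 1)
    (hperp : ⟪nh, Lh⟫ = 0) {x : Cfg n} (hx : ∀ e, edgeDiff τ x e = 0)
    (hxℓ : ⟪nh, blk x ℓ⟫ = 0) :
    x = ⟪Lh, blk x ℓ⟫ • V0 S Lh := by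
  refine Cfg.ext_blk (forall_of_iff_eL_eR (fun e => ?_) (i := ℓ) ?_)
  · rw [blk_smul, blk_V0, blk_smul, blk_V0, ← (mv_injective (hτ e)).eq_iff, mv_smul, mv_mv,
      ← hSR, ← sub_eq_zero.mp (hx e)]
  · rw [blk_smul, blk_V0, hSl, mv_one]
    exact eq_inner_smul_of_inner_eq_zero (by simp) (orthonormal_pair hnh hLh hperp) hxℓ

lemma norm_V0_sq (hτ : ∀ e, (τ e)ᵀ * τ e = 1) (hSl : S ℓ = 1)
    (hSR : ∀ e, S (eR e) = τ e * S (eL e)) (hLh : ‖Lh‖ = 1) : ‖V0 S Lh‖ ^ 2 = n := by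
  rw [← real_inner_self_eq_norm_sq, inner_eq_sum_inner_blk]
  have hk : ∀ k, ‖mv (S k) Lh‖ = 1 := fun k => by
    rw [norm_mv (transpose_mul_self_S hτ hSl hSR k), hLh]
  simp [blk_V0, hk]

end Laplacian

section Operator

variable {n : ℕ} {τ : Fin (n - 1) → Matrix (Fin 2) (Fin 2) ℝ} {ℓ : Fin n}
  {nh Lh : EuclideanSpace ℝ (Fin 2)} {S : Fin n → Matrix (Fin 2) (Fin 2) ℝ}
  {Qm : Matrix (Fin n × Fin 2) (Fin n × Fin 2) ℝ}

local notation "T" => Matrix.toEuclideanCLM (𝕜 := ℝ) Qm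

lemma inner_toEuclideanCLM_apply (hτ : ∀ e, (τ e)ᵀ * τ e = 1)
    (hQm : ∀ (p : Cfg n) (i : Fin n) (a : Fin 2),
      mvC Qm p (i, a) = lapAugAct n τ ℓ nh (blk p) i a) (x y : Cfg n) :
    ⟪T x, y⟫ = ∑ e, ⟪edgeDiff τ x e, edgeDiff τ y e⟫ + 2 * ⟪nh, blk x ℓ⟫ * ⟪nh, blk y ℓ⟫ := by
  rw [inner_eq_sum_inner_blk, ← sum_inner_lapAugAct hτ]
  refine Finset.sum_congr rfl fun i _ => congrArg (⟪·, blk y i⟫) ?_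
  ext a
  exact hQm x i a

lemma isPositive_toEuclideanCLM (hτ : ∀ e, (τ e)ᵀ * τ e = 1)
    (hQm : ∀ (p : Cfg n) (i : Fin n) (a : Fin 2),
      mvC Qm p (i, a) = lapAugAct n τ ℓ nh (blk p) i a) : (T).IsPositive := by
  rw [ContinuousLinearMap.isPositive_iff]
  refine ⟨fun x y => ?_, fun x => ?_⟩
  · change ⟪T x, y⟫ = ⟪x, T y⟫
    rw [inner_toEuclideanCLM_apply hτ hQm, real_inner_comm (T y),
      inner_toEuclideanCLM_apply hτ hQm]
    simp_rw [real_inner_comm (edgeDiff τ x _)]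
    ring
  · rw [inner_toEuclideanCLM_apply hτ hQm, mul_assoc]
    exact add_nonneg (Finset.sum_nonneg fun e _ => real_inner_self_nonneg)
      (mul_nonneg zero_le_two (mul_self_nonneg _))

lemma toEuclideanCLM_apply_eq_zero_iff (hτ : ∀ e, (τ e)ᵀ * τ e = 1)
    (hQm : ∀ (p : Cfg n) (i : Fin n) (a : Fin 2),
      mvC Qm p (i, a) = lapAugAct n τ ℓ nh (blk p) i a) (x : Cfg n) :
    T x = 0 ↔ (∀ e, edgeDiff τ x e = 0) ∧ ⟪nh, blk x ℓ⟫ = 0 := by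
  constructor
  · intro hx
    have h := inner_toEuclideanCLM_apply hτ hQm x x
    rw [hx, inner_zero_left] at h
    have hsum := Finset.sum_nonneg fun e (_ : e ∈ Finset.univ) =>
      real_inner_self_nonneg (x := edgeDiff τ x e)
    have hℓ := mul_self_nonneg ⟪nh, blk x ℓ⟫
    refine ⟨fun e => ?_, by nlinarith⟩
    refine inner_self_eq_zero.mp ((Finset.sum_eq_zero_iff_of_nonneg fun e _ =>
      real_inner_self_nonneg).mp ?_ e (Finset.mem_univ e))
    nlinarith
  · rintro ⟨hx, hxℓ⟩
    refine (inner_self_eq_zero (𝕜 := ℝ)).mp ?_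
    rw [real_inner_comm, inner_toEuclideanCLM_apply hτ hQm]
    simp [hx, hxℓ]

lemma ker_toEuclideanCLM (hτ : ∀ e, (τ e)ᵀ * τ e = 1) (hSl : S ℓ = 1)
    (hSR : ∀ e, S (eR e) = τ e * S (eL e)) (hnh : ‖nh‖ = 1) (hLh : ‖Lh‖ = 1)
    (hperp : ⟪nh, Lh⟫ = 0)
    (hQm : ∀ (p : Cfg n) (i : Fin n) (a : Fin 2),
      mvC Qm p (i, a) = lapAugAct n τ ℓ nh (blk p) i a) :
    (T).ker = ℝ ∙ V0 S Lh := by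
  ext x
  rw [LinearMap.mem_ker, ContinuousLinearMap.coe_coe, toEuclideanCLM_apply_eq_zero_iff hτ hQm,
    Submodule.mem_span_singleton]
  constructor
  · rintro ⟨hx, hxℓ⟩
    exact ⟨_, (eq_smul_V0_of_edgeDiff_eq_zero hτ hSl hSR hnh hLh hperp hx hxℓ).symm⟩
  · rintro ⟨c, rfl⟩
    refine ⟨fun e => ?_, ?_⟩
    · rw [edgeDiff_smul, edgeDiff_V0 hSR, smul_zero]
    · rw [blk_smul, blk_V0, hSl, mv_one, real_inner_smul_right, hperp, mul_zero]

end Operator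

theorem stmt0_general (n : ℕ)
    (τ : Fin (n - 1) → Matrix (Fin 2) (Fin 2) ℝ)
    (hτ : ∀ e, (τ e)ᵀ * τ e = 1)
    (ℓ : Fin n) (nh Lh : EuclideanSpace ℝ (Fin 2))
    (hnh : ‖nh‖ = 1) (hLh : ‖Lh‖ = 1) (hperp : (inner ℝ nh Lh : ℝ) = 0)
    (S : Fin n → Matrix (Fin 2) (Fin 2) ℝ)
    (hSl : S ℓ = 1)
    (hSup : ∀ e : Fin (n - 1), (ℓ : ℕ) ≤ (e : ℕ) → S (eR e) = τ e * S (eL e))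
    (hSdown : ∀ e : Fin (n - 1), (e : ℕ) < (ℓ : ℕ) → S (eL e) = (τ e)ᵀ * S (eR e))
    (Qm : Matrix (Fin n × Fin 2) (Fin n × Fin 2) ℝ)
    (hQm : ∀ (p : Cfg n) (i : Fin n) (a : Fin 2),
      mvC Qm p (i, a) = lapAugAct n τ ℓ nh (blk p) i a)
    (p0 : Cfg n) :
    Tendsto (fun t : ℝ => mvC (NormedSpace.exp ((-t) • Qm)) p0) atTop
        (𝓝 (((n : ℝ)⁻¹ * ∑ k : Fin n, (inner ℝ (mv (S k) Lh) (blk p0 k) : ℝ)) • V0 S Lh)) ∧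
      ∃ lam : ℝ, 0 < lam ∧ ∀ t : ℝ, 0 ≤ t →
        ‖mvC (NormedSpace.exp ((-t) • Qm)) p0
            - ((n : ℝ)⁻¹ * (inner ℝ (V0 S Lh) p0 : ℝ)) • V0 S Lh‖
          ≤ Real.exp (-lam * t) * ‖p0‖ := by
  have hSR := S_eR_eq hτ hSup hSdown
  have hT := isPositive_toEuclideanCLM hτ hQm
  have hexp : ∀ t : ℝ, mvC (NormedSpace.exp ((-t) • Qm)) p0 =
      NormedSpace.exp ((-t) • Matrix.toEuclideanCLM (𝕜 := ℝ) Qm) p0 := fun t => by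
    rw [← map_smul, ← Matrix.toEuclideanCLM_exp]
    rfl
  have hproj : (Matrix.toEuclideanCLM (𝕜 := ℝ) Qm).ker.starProjection p0 =
      ((n : ℝ)⁻¹ * ⟪V0 S Lh, p0⟫) • V0 S Lh := by
    simp only [ker_toEuclideanCLM hτ hSl hSR hnh hLh hperp hQm,
      Submodule.starProjection_singleton, norm_V0_sq hτ hSl hSR hLh, div_eq_inv_mul]
    rfl
  have hsum : ∑ k, ⟪mv (S k) Lh, blk p0 k⟫ = ⟪V0 S Lh, p0⟫ := by
    simp only [inner_eq_sum_inner_blk, blk_V0]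
  obtain ⟨lam, hlam, hdecay⟩ := hT.exists_norm_exp_neg_smul_sub_starProjection_le
  simp only [hexp, hsum, ← hproj]
  exact ⟨hT.tendsto_exp_neg_smul_apply p0, lam, hlam, fun t ht => hdecay t ht p0⟩

/-- For the augmented reflection-based Laplacian Q' (path-graph spanning
tree of Cₙ, orthogonal weights τᵢ, designated agent ℓ anchored to the mirror line with unit
normal n̂ and unit direction L̂, n̂·L̂ = 0), every solution p(t) = exp(−tQ')p(0) of ṗ = −Q'p
converges as t → ∞ to (1/n)·(Σₖ ⟨SₖL̂, pₖ(0)⟩)·V₀, the orthogonal projection of p(0) onto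
the line spanned by V₀ = (S₁L̂, …, SₙL̂); moreover the convergence is exponential. -/
theorem stmt0 (n : ℕ) (hn : 2 ≤ n)
    (τ : Fin (n - 1) → Matrix (Fin 2) (Fin 2) ℝ)
    (hτ : ∀ e, (τ e)ᵀ * τ e = 1)
    (ℓ : Fin n) (nh Lh : EuclideanSpace ℝ (Fin 2))
    (hnh : ‖nh‖ = 1) (hLh : ‖Lh‖ = 1) (hperp : (inner ℝ nh Lh : ℝ) = 0)
    (S : Fin n → Matrix (Fin 2) (Fin 2) ℝ)
    (hSl : S ℓ = 1)
    (hSup : ∀ e : Fin (n - 1), (ℓ : ℕ) ≤ (e : ℕ) → S (eR e) = τ e * S (eL e))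
    (hSdown : ∀ e : Fin (n - 1), (e : ℕ) < (ℓ : ℕ) → S (eL e) = (τ e)ᵀ * S (eR e))
    (Qm : Matrix (Fin n × Fin 2) (Fin n × Fin 2) ℝ)
    (hQm : ∀ (p : Cfg n) (i : Fin n) (a : Fin 2),
      mvC Qm p (i, a) = lapAugAct n τ ℓ nh (blk p) i a)
    (p0 : Cfg n) :
    Tendsto (fun t : ℝ => mvC (NormedSpace.exp ((-t) • Qm)) p0) atTop
        (𝓝 (((n : ℝ)⁻¹ * ∑ k : Fin n, (inner ℝ (mv (S k) Lh) (blk p0 k) : ℝ)) • V0 S Lh)) ∧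
      ∃ lam : ℝ, 0 < lam ∧ ∀ t : ℝ, 0 ≤ t →
        ‖mvC (NormedSpace.exp ((-t) • Qm)) p0
            - ((n : ℝ)⁻¹ * (inner ℝ (V0 S Lh) p0 : ℝ)) • V0 S Lh‖
          ≤ Real.exp (-lam * t) * ‖p0‖ :=
  stmt0_general n τ hτ ℓ nh Lh hnh hLh hperp S hSl hSup hSdown Qm hQm p0
end
end

section
/- Let n ≥ 2 and θ₀ ∈ ℝ. For i = 1,…,n−1 set n̂ᵢ = (cos(θ₀ + (2i−1)π/n), sin(θ₀ + (2i−1)π/n)) and τᵢ = H(n̂ᵢ) = I₂ − 2n̂ᵢn̂ᵢᵀ. Let L̂ = (−sin θ₀, cos θ₀), and define p₁ = L̂ and p_{i+1} = τᵢ pᵢ for i = 1,…,n−1. Then p_{i+1} = R(2π/n)·pᵢ for every i = 1,…,n−1; that is, the configuration obtained by propagating the anchored mirror direction through the inter-agent reflections automatically satisfies the rotational symmetry relations of the dihedral group C_{nv}. -/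
open Filter Topology Matrix

noncomputable section

/-- The 2×2 rotation matrix R(θ) = [[cos θ, −sin θ],[sin θ, cos θ]]. -/
def Rot (θ : ℝ) : Matrix (Fin 2) (Fin 2) ℝ :=
  !![Real.cos θ, -Real.sin θ; Real.sin θ, Real.cos θ]

/-- The Householder reflection H(u) = I₂ − 2uuᵀ across the line with unit normal u. -/
def House (u : EuclideanSpace ℝ (Fin 2)) : Matrix (Fin 2) (Fin 2) ℝ :=
  1 - (2 : ℝ) • Matrix.vecMulVec u u

/-- The unit vector (cos θ, sin θ). -/
def unitVec (θ : ℝ) : EuclideanSpace ℝ (Fin 2) := WithLp.toLp 2 ![Real.cos θ, Real.sin θ]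

/-! The reflection with normal `u(a) = (cos a, sin a)` sends `u(b)` to `u(2a + π - b)`. Hence, with
mirror normals at `α + (2k+1)δ` and `p₀ = u(α + π/2)`, induction gives `pₖ = u(α + π/2 + 2kδ)`,
so consecutive vectors differ by the rotation through `2δ`; here `δ = π/n`. -/

open Real

lemma unitVec_add_pi_div_two (θ : ℝ) :
    unitVec (θ + π / 2) = WithLp.toLp 2 ![-sin θ, cos θ] := by
  simp [unitVec, cos_add_pi_div_two, sin_add_pi_div_two]

theorem mv_House_unitVec (a b : ℝ) :
    mv (House (unitVec a)) (unitVec b) = unitVec (2 * a + π - b) := by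
  rw [add_sub_right_comm]
  ext i
  fin_cases i <;>
    simp [mv, House, unitVec, Matrix.vecMulVec, sin_add_pi, cos_add_pi, sin_sub, cos_sub,
      sin_two_mul, cos_two_mul] <;>
    grind [sin_sq_add_cos_sq]

theorem mv_Rot_unitVec (t b : ℝ) : mv (Rot t) (unitVec b) = unitVec (b + t) := by
  ext i
  fin_cases i <;> simp [mv, Rot, unitVec, sin_add, cos_add] <;> ring

section HouseholderChain

variable {n : ℕ} (α δ : ℝ) (p : Fin n → EuclideanSpace ℝ (Fin 2)) (hn : 0 < n)
  (h0 : p ⟨0, hn⟩ = unitVec (α + π / 2))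
  (hrec : ∀ e : Fin (n - 1),
    p (eR e) = mv (House (unitVec (α + (2 * (e : ℕ) + 1) * δ))) (p (eL e)))
include h0 hrec

theorem house_chain_eq_unitVec (k : ℕ) (hk : k < n) :
    p ⟨k, hk⟩ = unitVec (α + π / 2 + 2 * k * δ) := by
  induction k with
  | zero => simpa using h0
  | succ k ih =>
    have hstep := hrec ⟨k, by omega⟩
    rw [eR, eL, ih (by omega), mv_House_unitVec] at hstep
    rw [hstep]
    congr 1
    push_cast
    ring

theorem house_chain_rotation (e : Fin (n - 1)) : p (eR e) = mv (Rot (2 * δ)) (p (eL e)) := by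
  rw [eR, eL, house_chain_eq_unitVec α δ p hn h0 hrec, house_chain_eq_unitVec α δ p hn h0 hrec,
    mv_Rot_unitVec]
  congr 1
  push_cast
  ring

end HouseholderChain

/-- With mirror normals n̂ᵢ = (cos(θ₀+(2i−1)π/n), sin(θ₀+(2i−1)π/n)),
reflections τᵢ = H(n̂ᵢ), anchored direction L̂ = (−sin θ₀, cos θ₀), p₁ = L̂ and
p_{i+1} = τᵢ pᵢ, the propagated configuration satisfies the rotational relations
p_{i+1} = R(2π/n) pᵢ for every i = 1, …, n−1. -/
theorem stmt2 (n : ℕ) (hn : 2 ≤ n) (θ0 : ℝ)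
    (p : Fin n → EuclideanSpace ℝ (Fin 2))
    (hp1 : p ⟨0, by omega⟩ = ![-Real.sin θ0, Real.cos θ0])
    (hrec : ∀ e : Fin (n - 1),
      p (eR e) = mv (House (unitVec (θ0 + (2 * (e : ℕ) + 1 : ℝ) * Real.pi / n))) (p (eL e))) :
    ∀ e : Fin (n - 1), p (eR e) = mv (Rot (2 * Real.pi / n)) (p (eL e)) := by
  have h0 : p ⟨0, by omega⟩ = unitVec (θ0 + π / 2) := by
    rw [unitVec_add_pi_div_two, ← hp1]
  have hmirror : ∀ e : Fin (n - 1),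
      p (eR e) = mv (House (unitVec (θ0 + (2 * (e : ℕ) + 1) * (π / n)))) (p (eL e)) := by
    simpa only [mul_div_assoc] using hrec
  simpa only [mul_div_assoc] using house_chain_rotation θ0 (π / n) p (by omega) h0 hmirror
end
end
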